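/- Exactness of the Micro-Macro Parareal iteration with the FAS matching (Eq. (8)): let X (micro state space) and Y (macro state space) be additive abelian groups, let F, G : ℕ → X → X and Ĝ : ℕ → Y → Y be fine and coarse propagators (the coarse propagator acts on Y), let R : X → Y and L : Y → X be restriction and lifting maps, and let u₀ ∈ X. Define the iterates by: Û⁰₀ = R(u₀), Û⁰_{n+1} = Ĝ_{n+1}(Û⁰_n), U⁰_n = L(Û⁰_n) for n ≥ 1 with U⁰₀ = u₀; and for k ≥ 0: Û^{k+1}₀ = R(u₀), U^{k+1}₀ = u₀, Û^{k+1}_{n+1} = Ĝ_{n+1}(Û^{k+1}_n) + R(F_{n+1}(U^k_n)) − Ĝ_{n+1}(Û^k_n), and U^{k+1}_{n+1} = L(Û^{k+1}_{n+1}) + F_{n+1}(U^k_n) − L(R(F_{n+1}(U^k_n))). Let the serial fine solution be F₀^{ser} = u₀, F_{n+1}^{ser} = F_{n+1}(F_n^{ser}). Then for every k and every n with n ≤ k: Û^k_n = R(F_n^{ser}) and U^k_n = F_n^{ser}; in particular the micro iterate reproduces the serial fine solution on the first k time slices after k iterations. -/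
import Mathlib


/-- Exactness of the Micro-Macro Parareal iteration with the FAS matching (Eq. (8)):
with macro iterates `Uhat k n` on `Y`, micro iterates `U k n` on `X`, coarse propagator
`Ghat` on the macro scale, fine propagator `F` on the micro scale, restriction `R`,
lifting `L`, and initial value `u₀`, the iterates reproduce the serial fine solution:
`Uhat k n = R (Fser n)` and `U k n = Fser n` whenever `n ≤ k`. -/
theorem micro_macro_parareal_exactness {X Y : Type*} [AddCommGroup X] [AddCommGroup Y]
    (F G : ℕ → X → X) (Ghat : ℕ → Y → Y)
    (R : X → Y) (L : Y → X) (u₀ : X)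
    (Uhat : ℕ → ℕ → Y) (U : ℕ → ℕ → X) (Fser : ℕ → X)
    (hUhat00 : Uhat 0 0 = R u₀)
    (hUhat0 : ∀ n, Uhat 0 (n + 1) = Ghat (n + 1) (Uhat 0 n))
    (hU00 : U 0 0 = u₀)
    (hU0 : ∀ n, U 0 (n + 1) = L (Uhat 0 (n + 1)))
    (hUhatk0 : ∀ k, Uhat (k + 1) 0 = R u₀)
    (hUk0 : ∀ k, U (k + 1) 0 = u₀)
    (hUhatk : ∀ k n, Uhat (k + 1) (n + 1) =
      Ghat (n + 1) (Uhat (k + 1) n) + R (F (n + 1) (U k n)) - Ghat (n + 1) (Uhat k n))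
    (hUk : ∀ k n, U (k + 1) (n + 1) =
      L (Uhat (k + 1) (n + 1)) + F (n + 1) (U k n) - L (R (F (n + 1) (U k n))))
    (hF0 : Fser 0 = u₀)
    (hFs : ∀ n, Fser (n + 1) = F (n + 1) (Fser n)) :
    ∀ k n, n ≤ k → Uhat k n = R (Fser n) ∧ U k n = Fser n := by
  intro k n
  induction n generalizing k with
  | zero =>
    intro _
    cases k with
    | zero => simp [hUhat00, hU00, hF0]
    | succ j => simp [hUhatk0, hUk0, hF0]
  | succ n ih =>
    intro hnk
    cases k with
    | zero => omega
    | succ j =>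
      have hnj : n ≤ j := Nat.succ_le_succ_iff.mp hnk
      obtain ⟨h1, h2⟩ := ih j hnj
      obtain ⟨h3, _⟩ := ih (j + 1) (le_trans hnj (Nat.le_succ j))
      constructor
      · rw [hUhatk, h1, h2, h3, hFs]
        abel
      · rw [hUk, hUhatk, h1, h2, h3, hFs, add_sub_cancel_left]
        abel
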